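/- In the affine Weyl group of type D̃_4 with central generator s_2, the elements u_4 = s_3s_2s_4s_2s_3 and u_5 = s_4s_2s_5s_2s_4 are involutions and satisfy (u_4 u_5)² = e, and (s_1 u_4)³ = e. -/
import Mathlib

namespace AffineD4

/-- Generators of the free group on five letters `s₁, …, s₅` (indexed `0, …, 4`). -/
def x (i : Fin 5) : FreeGroup (Fin 5) := FreeGroup.of i

/-- Defining relators of the affine Weyl group of type `D̃₄`: generators
`s₁, …, s₅` with `s₂` (index `1`) the central node: `sᵢ² = 1`, `(s₂sᵢ)³ = 1` for
`i ∈ {1,3,4,5}`, and `(sᵢsⱼ)² = 1` for distinct `i, j ∈ {1,3,4,5}`. -/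
def Wrels : Set (FreeGroup (Fin 5)) :=
  { (x 0) ^ 2, (x 1) ^ 2, (x 2) ^ 2, (x 3) ^ 2, (x 4) ^ 2,
    (x 1 * x 0) ^ 3, (x 1 * x 2) ^ 3, (x 1 * x 3) ^ 3, (x 1 * x 4) ^ 3,
    (x 0 * x 2) ^ 2, (x 0 * x 3) ^ 2, (x 0 * x 4) ^ 2,
    (x 2 * x 3) ^ 2, (x 2 * x 4) ^ 2, (x 3 * x 4) ^ 2 }

/-- The affine Weyl group of type `D̃₄`. -/
def W : Type := PresentedGroup Wrels

instance : Group W := by unfold W; infer_instance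

/-- The simple reflection `sᵢ`. -/
def s (i : Fin 5) : W := PresentedGroup.of i

lemma rel_one {r : FreeGroup (Fin 5)} (h : r ∈ Wrels) : (PresentedGroup.mk Wrels r : W) = 1 := by
  change (QuotientGroup.mk r : PresentedGroup Wrels) = 1
  rw [QuotientGroup.eq_one_iff]
  exact Subgroup.subset_normalClosure h

lemma mk_x (i : Fin 5) : (PresentedGroup.mk Wrels (x i) : W) = s i := rfl

section helpers
variable {G : Type*} [Group G]

lemma inv_self {a : G} (h : a * a = 1) : a⁻¹ = a := inv_eq_of_mul_eq_one_right h

lemma comm_core {a b : G} (ha : a * a = 1) (hb : b * b = 1) (h : (a * b) ^ 2 = 1) :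
    a * b = b * a := by
  have h' : (a * b) * (a * b) = 1 := by rw [← pow_two]; exact h
  calc a * b = (a * b)⁻¹ := (inv_self h').symm
    _ = b⁻¹ * a⁻¹ := mul_inv_rev _ _
    _ = b * a := by rw [inv_self ha, inv_self hb]

lemma braid_core {a b : G} (ha : a * a = 1) (hb : b * b = 1) (h : (b * a) ^ 3 = 1) :
    b * (a * b) = a * (b * a) := by
  have ha' : ∀ g : G, a * (a * g) = g := fun g => by rw [← mul_assoc, ha, one_mul]
  have hb' : ∀ g : G, b * (b * g) = g := fun g => by rw [← mul_assoc, hb, one_mul]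
  have h3 : b * (a * (b * (a * (b * a)))) = 1 := by
    simpa only [pow_succ, pow_zero, one_mul, mul_assoc] using h
  have e2 : b * (a * b) = (b * (a * b)) * (b * (a * (b * (a * (b * a))))) := by
    rw [h3, mul_one]
  rw [e2]
  simp only [mul_assoc]
  rw [hb', ha', hb']

lemma sq_comm {A B : G} (hA : A * A = 1) (hB : B * B = 1) (hAB : A * B = B * A) :
    (A * B) ^ 2 = 1 := by
  calc (A * B) ^ 2 = A * ((B * A) * B) := by rw [pow_two]; simp only [mul_assoc]
    _ = A * ((A * B) * B) := by rw [← hAB]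
    _ = A * (A * (B * B)) := by simp only [mul_assoc]
    _ = 1 := by rw [hB, mul_one, hA]

end helpers

/-- In the affine Weyl group of type `D̃₄` with central generator `s₂`, the
elements `u₄ = s₃s₂s₄s₂s₃` and `u₅ = s₄s₂s₅s₂s₄` are involutions, commute
(`(u₄u₅)² = 1`), and satisfy the braid relation `(s₁u₄)³ = 1`. -/
theorem affine_D4_conjugated_generators :
    let u₄ : W := s 2 * s 1 * s 3 * s 1 * s 2
    let u₅ : W := s 3 * s 1 * s 4 * s 1 * s 3
    u₄ ^ 2 = 1 ∧ u₅ ^ 2 = 1 ∧ (u₄ * u₅) ^ 2 = 1 ∧ (s 0 * u₄) ^ 3 = 1 := by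
  -- memberships of the relators
  have m0 : (x 0) ^ 2 ∈ Wrels := Set.mem_insert _ _
  have m1 : (x 1) ^ 2 ∈ Wrels := Set.mem_insert_of_mem _ (Set.mem_insert _ _)
  have m2 : (x 2) ^ 2 ∈ Wrels :=
    Set.mem_insert_of_mem _ (Set.mem_insert_of_mem _ (Set.mem_insert _ _))
  have m3 : (x 3) ^ 2 ∈ Wrels :=
    Set.mem_insert_of_mem _ (Set.mem_insert_of_mem _ (Set.mem_insert_of_mem _
      (Set.mem_insert _ _)))
  have m4 : (x 4) ^ 2 ∈ Wrels :=
    Set.mem_insert_of_mem _ (Set.mem_insert_of_mem _ (Set.mem_insert_of_mem _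
      (Set.mem_insert_of_mem _ (Set.mem_insert _ _))))
  have m5 : (x 1 * x 0) ^ 3 ∈ Wrels :=
    Set.mem_insert_of_mem _ (Set.mem_insert_of_mem _ (Set.mem_insert_of_mem _
      (Set.mem_insert_of_mem _ (Set.mem_insert_of_mem _ (Set.mem_insert _ _)))))
  have m6 : (x 1 * x 2) ^ 3 ∈ Wrels :=
    Set.mem_insert_of_mem _ (Set.mem_insert_of_mem _ (Set.mem_insert_of_mem _
      (Set.mem_insert_of_mem _ (Set.mem_insert_of_mem _ (Set.mem_insert_of_mem _
        (Set.mem_insert _ _))))))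
  have m7 : (x 1 * x 3) ^ 3 ∈ Wrels :=
    Set.mem_insert_of_mem _ (Set.mem_insert_of_mem _ (Set.mem_insert_of_mem _
      (Set.mem_insert_of_mem _ (Set.mem_insert_of_mem _ (Set.mem_insert_of_mem _
        (Set.mem_insert_of_mem _ (Set.mem_insert _ _)))))))
  have m8 : (x 1 * x 4) ^ 3 ∈ Wrels :=
    Set.mem_insert_of_mem _ (Set.mem_insert_of_mem _ (Set.mem_insert_of_mem _
      (Set.mem_insert_of_mem _ (Set.mem_insert_of_mem _ (Set.mem_insert_of_mem _
        (Set.mem_insert_of_mem _ (Set.mem_insert_of_mem _ (Set.mem_insert _ _))))))))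
  have m9 : (x 0 * x 2) ^ 2 ∈ Wrels :=
    Set.mem_insert_of_mem _ (Set.mem_insert_of_mem _ (Set.mem_insert_of_mem _
      (Set.mem_insert_of_mem _ (Set.mem_insert_of_mem _ (Set.mem_insert_of_mem _
        (Set.mem_insert_of_mem _ (Set.mem_insert_of_mem _ (Set.mem_insert_of_mem _
          (Set.mem_insert _ _)))))))))
  have m10 : (x 0 * x 3) ^ 2 ∈ Wrels :=
    Set.mem_insert_of_mem _ (Set.mem_insert_of_mem _ (Set.mem_insert_of_mem _
      (Set.mem_insert_of_mem _ (Set.mem_insert_of_mem _ (Set.mem_insert_of_mem _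
        (Set.mem_insert_of_mem _ (Set.mem_insert_of_mem _ (Set.mem_insert_of_mem _
          (Set.mem_insert_of_mem _ (Set.mem_insert _ _))))))))))
  have m12 : (x 2 * x 3) ^ 2 ∈ Wrels :=
    Set.mem_insert_of_mem _ (Set.mem_insert_of_mem _ (Set.mem_insert_of_mem _
      (Set.mem_insert_of_mem _ (Set.mem_insert_of_mem _ (Set.mem_insert_of_mem _
        (Set.mem_insert_of_mem _ (Set.mem_insert_of_mem _ (Set.mem_insert_of_mem _
          (Set.mem_insert_of_mem _ (Set.mem_insert_of_mem _ (Set.mem_insert_of_mem _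
            (Set.mem_insert _ _))))))))))))
  have m13 : (x 2 * x 4) ^ 2 ∈ Wrels :=
    Set.mem_insert_of_mem _ (Set.mem_insert_of_mem _ (Set.mem_insert_of_mem _
      (Set.mem_insert_of_mem _ (Set.mem_insert_of_mem _ (Set.mem_insert_of_mem _
        (Set.mem_insert_of_mem _ (Set.mem_insert_of_mem _ (Set.mem_insert_of_mem _
          (Set.mem_insert_of_mem _ (Set.mem_insert_of_mem _ (Set.mem_insert_of_mem _
            (Set.mem_insert_of_mem _ (Set.mem_insert _ _)))))))))))))
  -- squares of generators
  have q0 : s 0 * s 0 = 1 := by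
    have := rel_one m0; rwa [pow_two, map_mul, mk_x] at this
  have q1 : s 1 * s 1 = 1 := by
    have := rel_one m1; rwa [pow_two, map_mul, mk_x] at this
  have q2 : s 2 * s 2 = 1 := by
    have := rel_one m2; rwa [pow_two, map_mul, mk_x] at this
  have q3 : s 3 * s 3 = 1 := by
    have := rel_one m3; rwa [pow_two, map_mul, mk_x] at this
  have q4 : s 4 * s 4 = 1 := by
    have := rel_one m4; rwa [pow_two, map_mul, mk_x] at this
  -- braid and commutation relators in W
  have R5 : (s 1 * s 0) ^ 3 = 1 := by
    have := rel_one m5; rwa [map_pow, map_mul, mk_x, mk_x] at this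
  have R6 : (s 1 * s 2) ^ 3 = 1 := by
    have := rel_one m6; rwa [map_pow, map_mul, mk_x, mk_x] at this
  have R7 : (s 1 * s 3) ^ 3 = 1 := by
    have := rel_one m7; rwa [map_pow, map_mul, mk_x, mk_x] at this
  have R8 : (s 1 * s 4) ^ 3 = 1 := by
    have := rel_one m8; rwa [map_pow, map_mul, mk_x, mk_x] at this
  have R9 : (s 0 * s 2) ^ 2 = 1 := by
    have := rel_one m9; rwa [map_pow, map_mul, mk_x, mk_x] at this
  have R10 : (s 0 * s 3) ^ 2 = 1 := by
    have := rel_one m10; rwa [map_pow, map_mul, mk_x, mk_x] at this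
  have R12 : (s 2 * s 3) ^ 2 = 1 := by
    have := rel_one m12; rwa [map_pow, map_mul, mk_x, mk_x] at this
  have R13 : (s 2 * s 4) ^ 2 = 1 := by
    have := rel_one m13; rwa [map_pow, map_mul, mk_x, mk_x] at this
  -- derived relations, in "continuation" form
  have ha' : ∀ g : W, s 0 * (s 0 * g) = g := fun g => by rw [← mul_assoc, q0, one_mul]
  have hb' : ∀ g : W, s 1 * (s 1 * g) = g := fun g => by rw [← mul_assoc, q1, one_mul]
  have hc' : ∀ g : W, s 2 * (s 2 * g) = g := fun g => by rw [← mul_assoc, q2, one_mul]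
  have hd' : ∀ g : W, s 3 * (s 3 * g) = g := fun g => by rw [← mul_assoc, q3, one_mul]
  have he' : ∀ g : W, s 4 * (s 4 * g) = g := fun g => by rw [← mul_assoc, q4, one_mul]
  have hac : s 0 * s 2 = s 2 * s 0 := comm_core q0 q2 R9
  have had : s 0 * s 3 = s 3 * s 0 := comm_core q0 q3 R10
  have hcd : s 2 * s 3 = s 3 * s 2 := comm_core q2 q3 R12
  have hce : s 2 * s 4 = s 4 * s 2 := comm_core q2 q4 R13
  have hac' : ∀ g : W, s 0 * (s 2 * g) = s 2 * (s 0 * g) := fun g => by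
    simpa only [mul_assoc] using congrArg (· * g) hac
  have had' : ∀ g : W, s 0 * (s 3 * g) = s 3 * (s 0 * g) := fun g => by
    simpa only [mul_assoc] using congrArg (· * g) had
  have hcd' : ∀ g : W, s 2 * (s 3 * g) = s 3 * (s 2 * g) := fun g => by
    simpa only [mul_assoc] using congrArg (· * g) hcd
  have hce' : ∀ g : W, s 2 * (s 4 * g) = s 4 * (s 2 * g) := fun g => by
    simpa only [mul_assoc] using congrArg (· * g) hce
  have hba' : ∀ g : W, s 1 * (s 0 * (s 1 * g)) = s 0 * (s 1 * (s 0 * g)) := fun g => by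
    simpa only [mul_assoc] using congrArg (· * g) (braid_core q0 q1 R5)
  have hbc' : ∀ g : W, s 1 * (s 2 * (s 1 * g)) = s 2 * (s 1 * (s 2 * g)) := fun g => by
    simpa only [mul_assoc] using congrArg (· * g) (braid_core q2 q1 R6)
  have hbd' : ∀ g : W, s 1 * (s 3 * (s 1 * g)) = s 3 * (s 1 * (s 3 * g)) := fun g => by
    simpa only [mul_assoc] using congrArg (· * g) (braid_core q3 q1 R7)
  have habab' : ∀ g : W, s 0 * (s 1 * (s 0 * (s 1 * g))) = s 1 * (s 0 * g) := fun g => by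
    rw [← hba', hb']
  -- the four statements
  show (s 2 * s 1 * s 3 * s 1 * s 2) ^ 2 = 1 ∧
      (s 3 * s 1 * s 4 * s 1 * s 3) ^ 2 = 1 ∧
      ((s 2 * s 1 * s 3 * s 1 * s 2) * (s 3 * s 1 * s 4 * s 1 * s 3)) ^ 2 = 1 ∧
      (s 0 * (s 2 * s 1 * s 3 * s 1 * s 2)) ^ 3 = 1
  have h4 : (s 2 * s 1 * s 3 * s 1 * s 2) * (s 2 * s 1 * s 3 * s 1 * s 2) = 1 := by
    simp only [mul_assoc]
    rw [hc', hb', hd', hb']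
    exact q2
  have h5 : (s 3 * s 1 * s 4 * s 1 * s 3) * (s 3 * s 1 * s 4 * s 1 * s 3) = 1 := by
    simp only [mul_assoc]
    rw [hd', hb', he', hb']
    exact q3
  have h45 : (s 2 * s 1 * s 3 * s 1 * s 2) * (s 3 * s 1 * s 4 * s 1 * s 3)
      = (s 3 * s 1 * s 4 * s 1 * s 3) * (s 2 * s 1 * s 3 * s 1 * s 2) := by
    simp only [mul_assoc]
    conv_lhs => rw [hcd']
    conv_lhs => rw [← hbd', hb', hcd', ← hbc', hb', hce']
    conv_rhs => rw [← hcd', ← hbd', hb', ← hcd, ← hbc', hb']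
  refine ⟨by rw [pow_two]; exact h4, by rw [pow_two]; exact h5, sq_comm h4 h5 h45, ?_⟩
  simp only [pow_succ, pow_zero, one_mul, mul_assoc]
  rw [hac', hac', hac', hc', hc']
  rw [hba', ← had']
  nth_rewrite 2 [had']
  rw [← hbd', habab', habab', hb', ← had', ha', hd', hb']
  exact q2

end AffineD4
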